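/- The set of solutions (p2, p3, p4, p5, p6, p15, p20, p10, p12, p41, p43, p45, p119) ∈ ℚ^13 with all coordinates nonzero of the system p41 = p10^3·p12, p43 = p10^2·p12^2, p45 = p10·p12^3, p119 = p41·p43·p10^2·p12^3, p119 = p10^12, p119 = p12^10, p119 = p2^60, p119 = p3^40, p119 = p4^30, p119 = p5^20, p119 = p6^20, p119 = p15^8, p119 = p20^6 forms, under componentwise multiplication, a group of order exactly 256 in which every element squares to the identity; hence it is isomorphic to (ℤ/2ℤ)^8. -/
import Mathlib



namespace Stmt11Aux

def sgn (a : ZMod 2) : ℚˣ := if a = 0 then 1 else -1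

lemma zmod2_cases (a : ZMod 2) : a = 0 ∨ a = 1 := by revert a; decide

lemma sgn_add (a b : ZMod 2) : sgn (a + b) = sgn a * sgn b := by
  have h11 : (1 + 1 : ZMod 2) = 0 := by decide
  have h10 : (1 : ZMod 2) ≠ 0 := by decide
  rcases zmod2_cases a with rfl | rfl <;> rcases zmod2_cases b with rfl | rfl <;>
    simp [sgn, h11, h10]

lemma sgn_zero : sgn 0 = 1 := rfl

lemma sgn_sq (a : ZMod 2) : sgn a * sgn a = 1 := by
  have h10 : (1 : ZMod 2) ≠ 0 := by decide
  rcases zmod2_cases a with rfl | rfl <;> simp [sgn, h10]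

lemma sgn_pow_two (a : ZMod 2) : sgn a ^ 2 = 1 := by rw [pow_two]; exact sgn_sq a

lemma pow_eq_one_of_sq (u : ℚˣ) (h : u ^ 2 = 1) (k : ℕ) : u ^ (2 * k) = 1 := by
  rw [pow_mul, h, one_pow]

lemma pow_odd_of_sq (u : ℚˣ) (h : u ^ 2 = 1) (k : ℕ) : u ^ (2 * k + 1) = u := by
  rw [pow_succ, pow_mul, h, one_pow, one_mul]

lemma sq_eq_one_of (u : ℚˣ) (n : ℕ) (hn : n ≠ 0) (h : u ^ (2 * n) = 1) : u ^ 2 = 1 := by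
  have hc : (u : ℚ) ^ (2 * n) = 1 := by
    have := congrArg Units.val h; push_cast at this; exact this
  have hq : ((u : ℚ) ^ 2) ^ n = 1 ^ n := by rw [one_pow, ← pow_mul]; exact hc
  have h2 : (u : ℚ) ^ 2 = 1 :=
    (pow_left_inj₀ (sq_nonneg _) zero_le_one hn).mp (by simpa using hq)
  exact Units.ext (by push_cast; exact h2)

lemma units_cases (u : ℚˣ) (h : u ^ 2 = 1) : u = 1 ∨ u = -1 := by
  have h2 : (u : ℚ) ^ 2 = 1 := by
    have := congrArg Units.val h; push_cast at this; exact this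
  have h0 : ((u : ℚ) - 1) * ((u : ℚ) + 1) = 0 := by nlinarith [h2]
  rcases mul_eq_zero.mp h0 with h' | h'
  · left; exact Units.ext (by push_cast; linarith)
  · right; exact Units.ext (by push_cast; linarith)

lemma neg_one_ne_one : (-1 : ℚˣ) ≠ 1 := by
  intro h
  have := congrArg Units.val h
  norm_num at this

lemma sgn_if (u : ℚˣ) (h : u ^ 2 = 1) : sgn (if u = 1 then 0 else 1) = u := by
  have h10 : (1 : ZMod 2) ≠ 0 := by decide
  rcases units_cases u h with rfl | rfl
  · simp [sgn]
  · simp [sgn, neg_one_ne_one, h10]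

def φfun (v : Fin 8 → ZMod 2) : Fin 13 → ℚˣ
  | ⟨0, _⟩ => sgn (v 0)
  | ⟨1, _⟩ => sgn (v 1)
  | ⟨2, _⟩ => sgn (v 2)
  | ⟨3, _⟩ => sgn (v 3)
  | ⟨4, _⟩ => sgn (v 4)
  | ⟨5, _⟩ => sgn (v 5)
  | ⟨6, _⟩ => sgn (v 6)
  | ⟨7, _⟩ => 1
  | ⟨8, _⟩ => sgn (v 7)
  | ⟨9, _⟩ => sgn (v 7)
  | ⟨10, _⟩ => 1
  | ⟨11, _⟩ => sgn (v 7)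
  | ⟨12, _⟩ => 1

def φ : Multiplicative (Fin 8 → ZMod 2) →* (Fin 13 → ℚˣ) where
  toFun v := φfun (Multiplicative.toAdd v)
  map_one' := by
    funext i
    fin_cases i <;> rfl
  map_mul' x y := by
    funext i
    fin_cases i <;> first | exact (one_mul 1).symm | exact sgn_add _ _

lemma φ_inj : Function.Injective φ := by
  rw [injective_iff_map_eq_one]
  intro v hv
  have key : ∀ a : ZMod 2, sgn a = 1 → a = 0 := by
    intro a ha
    rcases zmod2_cases a with rfl | rfl
    · rfl
    · have h10 : (1 : ZMod 2) ≠ 0 := by decide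
      have hs : sgn 1 = -1 := by simp [sgn, h10]
      rw [hs] at ha
      exact absurd ha neg_one_ne_one
  have h8 : ∀ j : Fin 8, Multiplicative.toAdd v j = 0 := by
    intro j
    fin_cases j
    · exact key _ (congrFun hv 0)
    · exact key _ (congrFun hv 1)
    · exact key _ (congrFun hv 2)
    · exact key _ (congrFun hv 3)
    · exact key _ (congrFun hv 4)
    · exact key _ (congrFun hv 5)
    · exact key _ (congrFun hv 6)
    · exact key _ (congrFun hv 8)
  show v = 1
  apply Multiplicative.toAdd.injective
  funext j
  exact h8 j

def free : Fin 8 → Fin 13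
  | ⟨0, _⟩ => 0
  | ⟨1, _⟩ => 1
  | ⟨2, _⟩ => 2
  | ⟨3, _⟩ => 3
  | ⟨4, _⟩ => 4
  | ⟨5, _⟩ => 5
  | ⟨6, _⟩ => 6
  | ⟨7, _⟩ => 8

lemma φfun_mem (w : Fin 8 → ZMod 2) :
    φfun w 9 = φfun w 7 ^ 3 * φfun w 8 ∧
    φfun w 10 = φfun w 7 ^ 2 * φfun w 8 ^ 2 ∧
    φfun w 11 = φfun w 7 * φfun w 8 ^ 3 ∧
    φfun w 12 = φfun w 9 * φfun w 10 * φfun w 7 ^ 2 * φfun w 8 ^ 3 ∧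
    φfun w 12 = φfun w 7 ^ 12 ∧
    φfun w 12 = φfun w 8 ^ 10 ∧
    φfun w 12 = φfun w 0 ^ 60 ∧
    φfun w 12 = φfun w 1 ^ 40 ∧
    φfun w 12 = φfun w 2 ^ 30 ∧
    φfun w 12 = φfun w 3 ^ 20 ∧
    φfun w 12 = φfun w 4 ^ 20 ∧
    φfun w 12 = φfun w 5 ^ 8 ∧
    φfun w 12 = φfun w 6 ^ 6 := by
  have hcube : ∀ j, sgn (w j) ^ 3 = sgn (w j) := fun j => pow_odd_of_sq _ (sgn_pow_two _) 1
  refine ⟨?_, ?_, ?_, ?_, ?_, ?_, ?_, ?_, ?_, ?_, ?_, ?_, ?_⟩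
  · show sgn (w 7) = (1 : ℚˣ) ^ 3 * sgn (w 7)
    rw [one_pow, one_mul]
  · show (1 : ℚˣ) = (1 : ℚˣ) ^ 2 * sgn (w 7) ^ 2
    rw [one_pow, one_mul, sgn_pow_two]
  · show sgn (w 7) = 1 * sgn (w 7) ^ 3
    rw [one_mul, hcube]
  · show (1 : ℚˣ) = sgn (w 7) * 1 * (1 : ℚˣ) ^ 2 * sgn (w 7) ^ 3
    rw [mul_one, one_pow, mul_one, hcube]
    exact (sgn_sq _).symm
  · show (1 : ℚˣ) = (1 : ℚˣ) ^ 12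
    rw [one_pow]
  · show (1 : ℚˣ) = sgn (w 7) ^ 10
    exact (pow_eq_one_of_sq _ (sgn_pow_two _) 5).symm
  · exact (pow_eq_one_of_sq _ (sgn_pow_two (w 0)) 30).symm
  · exact (pow_eq_one_of_sq _ (sgn_pow_two (w 1)) 20).symm
  · exact (pow_eq_one_of_sq _ (sgn_pow_two (w 2)) 15).symm
  · exact (pow_eq_one_of_sq _ (sgn_pow_two (w 3)) 10).symm
  · exact (pow_eq_one_of_sq _ (sgn_pow_two (w 4)) 10).symm
  · exact (pow_eq_one_of_sq _ (sgn_pow_two (w 5)) 4).symm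
  · exact (pow_eq_one_of_sq _ (sgn_pow_two (w 6)) 3).symm

end Stmt11Aux

open Stmt11Aux

/-- Remark 3.3, algebra (ΛU₆, δ₆): nonzero solutions (tuples `Fin 13 → ℚˣ`,
coordinates `p 0 = p2`, `p 1 = p3`, `p 2 = p4`, `p 3 = p5`, `p 4 = p6`, `p 5 = p15`, `p 6 = p20`, `p 7 = p10`, `p 8 = p12`, `p 9 = p41`, `p 10 = p43`, `p 11 = p45`, `p 12 = p119`)
form a group of order 256 under componentwise multiplication in which every
element squares to the identity; hence it is isomorphic to (ℤ/2ℤ)^8. -/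
theorem stmt_11 :
    ∃ H : Subgroup (Fin 13 → ℚˣ),
      (H : Set (Fin 13 → ℚˣ)) =
        {p : Fin 13 → ℚˣ | p 9 = p 7 ^ 3 * p 8 ∧
        p 10 = p 7 ^ 2 * p 8 ^ 2 ∧
        p 11 = p 7 * p 8 ^ 3 ∧
        p 12 = p 9 * p 10 * p 7 ^ 2 * p 8 ^ 3 ∧
        p 12 = p 7 ^ 12 ∧
        p 12 = p 8 ^ 10 ∧
        p 12 = p 0 ^ 60 ∧
        p 12 = p 1 ^ 40 ∧
        p 12 = p 2 ^ 30 ∧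
        p 12 = p 3 ^ 20 ∧
        p 12 = p 4 ^ 20 ∧
        p 12 = p 5 ^ 8 ∧
        p 12 = p 6 ^ 6} ∧
      Nat.card H = 256 ∧
      (∀ x ∈ H, x * x = 1) ∧
      Nonempty (H ≃* Multiplicative (Fin 8 → ZMod 2)) := by
  refine ⟨φ.range, ?_, ?_, ?_, ?_⟩
  · ext p
    simp only [SetLike.mem_coe, MonoidHom.mem_range, Set.mem_setOf_eq]
    constructor
    · rintro ⟨v, rfl⟩
      exact φfun_mem (Multiplicative.toAdd v)
    · rintro ⟨h1, h2, h3, h4, h5, h6, h7, h8, h9, h10, h11, h12, h13⟩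
      -- derive structure
      have haux : p 12 = p 7 ^ 7 * p 8 ^ 6 := by
        rw [h4, h1, h2]
        apply Units.ext
        push_cast
        ring
      have e1 : p 8 ^ 6 = p 7 ^ 5 := by
        have h' : p 7 ^ 7 * p 8 ^ 6 = p 7 ^ 7 * p 7 ^ 5 := by
          rw [← pow_add]
          exact haux.symm.trans h5
        exact mul_left_cancel h'
      have e2 : p 7 ^ 7 = p 8 ^ 4 := by
        have h' : p 7 ^ 7 * p 8 ^ 6 = p 8 ^ 4 * p 8 ^ 6 := by
          rw [← pow_add]
          exact haux.symm.trans h6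
        exact mul_right_cancel h'
      have c1 : p 8 ^ 42 = p 8 ^ 20 := by
        have c : (p 8 ^ 6) ^ 7 = (p 8 ^ 4) ^ 5 := by
          calc (p 8 ^ 6) ^ 7 = (p 7 ^ 5) ^ 7 := by rw [e1]
            _ = (p 7 ^ 7) ^ 5 := by rw [← pow_mul, ← pow_mul]
            _ = (p 8 ^ 4) ^ 5 := by rw [e2]
        rw [← pow_mul, ← pow_mul] at c
        exact c
      have h22 : p 8 ^ 22 = 1 := by
        have h' : p 8 ^ 20 * p 8 ^ 22 = p 8 ^ 20 * 1 := by
          rw [mul_one, ← pow_add]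
          exact c1
        exact mul_left_cancel h'
      have hs8 : p 8 ^ 2 = 1 := sq_eq_one_of _ 11 (by norm_num) h22
      have h86 : p 8 ^ 6 = 1 := pow_eq_one_of_sq _ hs8 3
      have h84 : p 8 ^ 4 = 1 := pow_eq_one_of_sq _ hs8 2
      have h75 : p 7 ^ 5 = 1 := e1.symm.trans h86
      have h77 : p 7 ^ 7 = 1 := e2.trans h84
      have hp7 : p 7 = 1 := by
        have h15 : p 7 ^ 15 = 1 := by
          rw [show (15 : ℕ) = 5 * 3 from rfl, pow_mul, h75, one_pow]
        have h14 : p 7 ^ 14 = 1 := by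
          rw [show (14 : ℕ) = 7 * 2 from rfl, pow_mul, h77, one_pow]
        calc p 7 = p 7 ^ 15 * (p 7 ^ 14)⁻¹ := by group
          _ = 1 := by rw [h15, h14]; simp
      have hp12 : p 12 = 1 := by rw [h5, hp7, one_pow]
      have hs0 : p 0 ^ 2 = 1 := sq_eq_one_of _ 30 (by norm_num) (h7.symm.trans hp12)
      have hs1 : p 1 ^ 2 = 1 := sq_eq_one_of _ 20 (by norm_num) (h8.symm.trans hp12)
      have hs2 : p 2 ^ 2 = 1 := sq_eq_one_of _ 15 (by norm_num) (h9.symm.trans hp12)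
      have hs3 : p 3 ^ 2 = 1 := sq_eq_one_of _ 10 (by norm_num) (h10.symm.trans hp12)
      have hs4 : p 4 ^ 2 = 1 := sq_eq_one_of _ 10 (by norm_num) (h11.symm.trans hp12)
      have hs5 : p 5 ^ 2 = 1 := sq_eq_one_of _ 4 (by norm_num) (h12.symm.trans hp12)
      have hs6 : p 6 ^ 2 = 1 := sq_eq_one_of _ 3 (by norm_num) (h13.symm.trans hp12)
      have h9' : p 9 = p 8 := by rw [h1, hp7, one_pow, one_mul]
      have h10' : p 10 = 1 := by rw [h2, hp7, one_pow, one_mul, hs8]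
      have h11' : p 11 = p 8 := by
        rw [h3, hp7, one_mul]
        exact pow_odd_of_sq _ hs8 1
      refine ⟨Multiplicative.ofAdd (fun j => if p (free j) = 1 then 0 else 1), ?_⟩
      funext i
      fin_cases i
      · exact sgn_if _ hs0
      · exact sgn_if _ hs1
      · exact sgn_if _ hs2
      · exact sgn_if _ hs3
      · exact sgn_if _ hs4
      · exact sgn_if _ hs5
      · exact sgn_if _ hs6
      · exact hp7.symm
      · exact sgn_if _ hs8
      · exact (sgn_if _ hs8).trans h9'.symm
      · exact h10'.symm
      · exact (sgn_if _ hs8).trans h11'.symm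
      · exact hp12.symm
  · have e := MonoidHom.ofInjective φ_inj
    rw [Nat.card_congr e.toEquiv.symm]
    simp [Nat.card_eq_fintype_card, Fintype.card_fun]
  · rintro x ⟨v, rfl⟩
    have hv : v * v = 1 := by
      apply Multiplicative.toAdd.injective
      rw [toAdd_mul, toAdd_one]
      funext j
      rcases zmod2_cases (Multiplicative.toAdd v j) with h | h <;> rw [Pi.add_apply, h, Pi.zero_apply] <;> decide
    rw [← map_mul, hv, map_one]
  · exact ⟨(MonoidHom.ofInjective φ_inj).symm⟩
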